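/- Let γ=(x,z): (I,t₀) → (ℝ²,(x₀,z₀)) and γ̃=(x̃,z̃): (Ĩ,t̃₀) → (ℝ²,(x̃₀,z̃₀)) be smooth curves with x₀ > 0 and x̃₀ > 0, and let 𝐳(t,θ)=(x(t)cosθ, x(t)sinθ, z(t)) and 𝐳̃ be their surfaces of revolution around the z-axis. If there exist a diffeomorphism germ φ: (I,t₀) → (Ĩ,t̃₀) and a diffeomorphism germ ψ = (ψ₁,ψ₂): (ℝ²,(x₀,z₀)) → (ℝ²,(x̃₀,z̃₀)) with ψ∘γ = γ̃∘φ, then Φ(t,θ) = (φ(t),θ) is a diffeomorphism germ at (t₀,θ₀), the map Ψ(X,Y,Z) = (Xψ₁(√(X²+Y²),Z)/√(X²+Y²), Yψ₁(√(X²+Y²),Z)/√(X²+Y²), ψ₂(√(X²+Y²),Z)) is a diffeomorphism germ at 𝐳(t₀,θ₀) = (x₀cosθ₀, x₀sinθ₀, z₀), and Ψ∘𝐳 = 𝐳̃∘Φ near (t₀,θ₀). -/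

import Mathlib

open Real

/-- `f` is a germ of diffeomorphism at `p`, sending `p` to `q`: `f` is smooth near `p`
and has a smooth local inverse near `q`. -/
def DiffeoGermAt {E F : Type*} [NormedAddCommGroup E] [NormedSpace ℝ E]
    [NormedAddCommGroup F] [NormedSpace ℝ F] (f : E → F) (p : E) (q : F) : Prop :=
  f p = q ∧ ∃ (U : Set E) (V : Set F) (g : F → E),
    IsOpen U ∧ p ∈ U ∧ IsOpen V ∧ q ∈ V ∧
    ContDiffOn ℝ (⊤ : ℕ∞) f U ∧ ContDiffOn ℝ (⊤ : ℕ∞) g V ∧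
    Set.MapsTo f U V ∧ Set.MapsTo g V U ∧
    (∀ p' ∈ U, g (f p') = p') ∧ (∀ q' ∈ V, f (g q') = q')

/-!
Write a point of `ℝ³` in cylindrical coordinates as `revolve (r, h) θ = (r cos θ, r sin θ, h)`.
Off the `z`-axis, `Ψ` acts by `revolve p θ ↦ revolve (ψ p) θ`: it applies `ψ` in the meridian
half-plane and keeps the angle. Hence `Ψ ∘ 𝐳 = 𝐳̃ ∘ Φ` is the profile relation `ψ ∘ γ = γ̃ ∘ φ`
read in each meridian plane, and the lift of the inverse germ of `ψ` (restricted to the half-plane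
`r > 0`, where the radius is smooth) is a smooth inverse of `Ψ`.
-/

open Set Filter Topology

namespace DiffeoGermAt

variable {E F E' F' : Type*} [NormedAddCommGroup E] [NormedSpace ℝ E]
  [NormedAddCommGroup F] [NormedSpace ℝ F] [NormedAddCommGroup E'] [NormedSpace ℝ E']
  [NormedAddCommGroup F'] [NormedSpace ℝ F']

theorem id (p : E) : DiffeoGermAt (id : E → E) p p :=
  ⟨rfl, univ, univ, _root_.id, isOpen_univ, trivial, isOpen_univ, trivial, contDiffOn_id,
    contDiffOn_id, mapsTo_id _, mapsTo_id _, fun _ _ => rfl, fun _ _ => rfl⟩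

theorem prodMap {f : E → F} {f' : E' → F'} {p : E} {q : F} {p' : E'} {q' : F'}
    (hf : DiffeoGermAt f p q) (hf' : DiffeoGermAt f' p' q') :
    DiffeoGermAt (Prod.map f f') (p, p') (q, q') := by
  obtain ⟨hfp, U, V, g, hU, hpU, hV, hqV, hfU, hgV, hfUV, hgVU, hgf, hfg⟩ := hf
  obtain ⟨hfp', U', V', g', hU', hpU', hV', hqV', hfU', hgV', hfUV', hgVU', hgf', hfg'⟩ := hf'
  refine ⟨by rw [Prod.map_apply, hfp, hfp'], U ×ˢ U', V ×ˢ V', Prod.map g g', hU.prod hU',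
    ⟨hpU, hpU'⟩, hV.prod hV', ⟨hqV, hqV'⟩, ?_, ?_, hfUV.prodMap hfUV', hgVU.prodMap hgVU',
    fun r hr => Prod.ext (hgf _ hr.1) (hgf' _ hr.2),
    fun r hr => Prod.ext (hfg _ hr.1) (hfg' _ hr.2)⟩
  · exact (hfU.comp contDiffOn_fst fun _ hr => hr.1).prodMk
      (hfU'.comp contDiffOn_snd fun _ hr => hr.2)
  · exact (hgV.comp contDiffOn_fst fun _ hr => hr.1).prodMk
      (hgV'.comp contDiffOn_snd fun _ hr => hr.2)

theorem exists_subset {f : E → F} {p : E} {q : F} (hf : DiffeoGermAt f p q) {A : Set E}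
    {B : Set F} (hA : IsOpen A) (hpA : p ∈ A) (hB : IsOpen B) (hqB : q ∈ B) :
    ∃ (U : Set E) (V : Set F) (g : F → E), IsOpen U ∧ p ∈ U ∧ IsOpen V ∧ q ∈ V ∧
      ContDiffOn ℝ (⊤ : ℕ∞) f U ∧ ContDiffOn ℝ (⊤ : ℕ∞) g V ∧ MapsTo f U V ∧ MapsTo g V U ∧
      LeftInvOn g f U ∧ RightInvOn g f V ∧ U ⊆ A ∧ V ⊆ B := by
  obtain ⟨hfp, U, V, g, hU, hpU, hV, hqV, hfU, hgV, hfUV, hgVU, hgf, hfg⟩ := hf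
  have hgq : g q = p := hfp ▸ hgf p hpU
  refine ⟨U ∩ A ∩ f ⁻¹' (V ∩ B), V ∩ B ∩ g ⁻¹' (U ∩ A), g,
    (hfU.continuousOn.mono inter_subset_left).isOpen_inter_preimage (hU.inter hA) (hV.inter hB),
    ⟨⟨hpU, hpA⟩, show f p ∈ V ∩ B from hfp ▸ ⟨hqV, hqB⟩⟩,
    (hgV.continuousOn.mono inter_subset_left).isOpen_inter_preimage (hV.inter hB) (hU.inter hA),
    ⟨⟨hqV, hqB⟩, show g q ∈ U ∩ A from hgq ▸ ⟨hpU, hpA⟩⟩,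
    hfU.mono fun _ hr => hr.1.1, hgV.mono fun _ hr => hr.1.1,
    fun r hr => ⟨hr.2, show g (f r) ∈ U ∩ A from (hgf r hr.1.1).symm ▸ hr.1⟩,
    fun r hr => ⟨hr.2, show f (g r) ∈ V ∩ B from (hfg r hr.1.1).symm ▸ hr.1⟩,
    fun r hr => hgf r hr.1.1, fun r hr => hfg r hr.1.1, fun _ hr => hr.1.2, fun _ hr => hr.1.2⟩

end DiffeoGermAt

noncomputable def revolve (p : ℝ × ℝ) (θ : ℝ) : ℝ × ℝ × ℝ := (p.1 * cos θ, p.1 * sin θ, p.2)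

noncomputable def meridian (q : ℝ × ℝ × ℝ) : ℝ × ℝ := (√(q.1 ^ 2 + q.2.1 ^ 2), q.2.2)

/-- The map `Ψ` of the theorem is `revolutionLift (ψ₁, ψ₂)`. On the `z`-axis the division by the
radius `0` makes the first two coordinates junk `0`. -/
noncomputable def revolutionLift (u : ℝ × ℝ → ℝ × ℝ) (q : ℝ × ℝ × ℝ) : ℝ × ℝ × ℝ :=
  (q.1 * (u (meridian q)).1 / (meridian q).1, q.2.1 * (u (meridian q)).1 / (meridian q).1,
    (u (meridian q)).2)

theorem continuous_meridian : Continuous meridian := by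
  unfold meridian
  fun_prop

theorem contDiffAt_meridian {n : WithTop ℕ∞} {q : ℝ × ℝ × ℝ} (hq : 0 < (meridian q).1) :
    ContDiffAt ℝ n meridian q := by
  have hsq : q.1 ^ 2 + q.2.1 ^ 2 ≠ 0 := fun h => by simp [meridian, h] at hq
  exact ((contDiffAt_sqrt hsq).comp q (by fun_prop)).prodMk (by fun_prop)

theorem meridian_revolve {p : ℝ × ℝ} (hp : 0 ≤ p.1) (θ : ℝ) : meridian (revolve p θ) = p := by
  have hsq : (p.1 * cos θ) ^ 2 + (p.1 * sin θ) ^ 2 = p.1 ^ 2 := by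
    linear_combination p.1 ^ 2 * sin_sq_add_cos_sq θ
  simp only [meridian, revolve, hsq, sqrt_sq hp]

theorem exists_revolve_meridian_eq (q : ℝ × ℝ × ℝ) : ∃ θ, revolve (meridian q) θ = q := by
  let w : ℂ := ⟨q.1, q.2.1⟩
  have hw : ‖w‖ = (meridian q).1 := Complex.norm_eq_sqrt_sq_add_sq w
  refine ⟨w.arg, ?_⟩
  simp only [revolve, ← hw, Complex.norm_mul_cos_arg, Complex.norm_mul_sin_arg]
  rfl

theorem revolutionLift_revolve (u : ℝ × ℝ → ℝ × ℝ) {p : ℝ × ℝ} (hp : 0 < p.1) (θ : ℝ) :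
    revolutionLift u (revolve p θ) = revolve (u p) θ := by
  rw [revolutionLift, meridian_revolve hp.le]
  simp only [revolve, Prod.mk.injEq]
  exact ⟨by field_simp, by field_simp, trivial⟩

theorem meridian_revolutionLift {u : ℝ × ℝ → ℝ × ℝ} {q : ℝ × ℝ × ℝ}
    (hq : 0 < (meridian q).1) (hu : 0 ≤ (u (meridian q)).1) :
    meridian (revolutionLift u q) = u (meridian q) := by
  obtain ⟨θ, hθ⟩ := exists_revolve_meridian_eq q
  calc meridian (revolutionLift u q)
      = meridian (revolutionLift u (revolve (meridian q) θ)) := by rw [hθ]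
    _ = u (meridian q) := by rw [revolutionLift_revolve u hq, meridian_revolve hu]

theorem revolutionLift_revolutionLift_of_eq {u v : ℝ × ℝ → ℝ × ℝ} {q : ℝ × ℝ × ℝ}
    (hq : 0 < (meridian q).1) (hu : 0 < (u (meridian q)).1)
    (hvu : v (u (meridian q)) = meridian q) :
    revolutionLift v (revolutionLift u q) = q := by
  obtain ⟨θ, hθ⟩ := exists_revolve_meridian_eq q
  calc revolutionLift v (revolutionLift u q)
      = revolutionLift v (revolutionLift u (revolve (meridian q) θ)) := by rw [hθ]
    _ = q := by rw [revolutionLift_revolve u hq, revolutionLift_revolve v hu, hvu, hθ]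

theorem contDiffAt_revolutionLift {n : WithTop ℕ∞} {u : ℝ × ℝ → ℝ × ℝ} {q : ℝ × ℝ × ℝ}
    (hq : 0 < (meridian q).1) (hu : ContDiffAt ℝ n u (meridian q)) :
    ContDiffAt ℝ n (revolutionLift u) q := by
  have hm : ContDiffAt ℝ n meridian q := contDiffAt_meridian hq
  have hum : ContDiffAt ℝ n (fun q => u (meridian q)) q := hu.comp q hm
  exact ((contDiffAt_fst.mul hum.fst).div hm.fst hq.ne').prodMk
    ((contDiffAt_snd.fst.mul hum.fst).div hm.fst hq.ne' |>.prodMk hum.snd)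

theorem DiffeoGermAt.revolutionLift {u : ℝ × ℝ → ℝ × ℝ} {p q : ℝ × ℝ}
    (hu : DiffeoGermAt u p q) (hp : 0 < p.1) (hq : 0 < q.1) (θ : ℝ) :
    DiffeoGermAt (revolutionLift u) (revolve p θ) (revolve q θ) := by
  have hH : IsOpen {r : ℝ × ℝ | 0 < r.1} := isOpen_lt continuous_const continuous_fst
  obtain ⟨U, V, g, hU, hpU, hV, hqV, huU, hgV, huUV, hgVU, hgu, hug, hUH, hVH⟩ :=
    hu.exists_subset hH hp hH hq
  refine ⟨by rw [revolutionLift_revolve u hp, hu.1], meridian ⁻¹' U, meridian ⁻¹' V,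
    _root_.revolutionLift g, hU.preimage continuous_meridian,
    by rwa [mem_preimage, meridian_revolve hp.le], hV.preimage continuous_meridian,
    by rwa [mem_preimage, meridian_revolve hq.le], ?_, ?_, ?_, ?_, ?_, ?_⟩
  · exact fun r hr =>
      (contDiffAt_revolutionLift (hUH hr) (huU.contDiffAt (hU.mem_nhds hr))).contDiffWithinAt
  · exact fun r hr =>
      (contDiffAt_revolutionLift (hVH hr) (hgV.contDiffAt (hV.mem_nhds hr))).contDiffWithinAt
  · intro r hr
    rw [mem_preimage, meridian_revolutionLift (hUH hr) (hVH (huUV hr)).le]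
    exact huUV hr
  · intro r hr
    rw [mem_preimage, meridian_revolutionLift (hVH hr) (hUH (hgVU hr)).le]
    exact hgVU hr
  · exact fun r hr => revolutionLift_revolutionLift_of_eq (hUH hr) (hVH (huUV hr)) (hgu hr)
  · exact fun r hr => revolutionLift_revolutionLift_of_eq (hVH hr) (hUH (hgVU hr)) (hug hr)

theorem eventually_revolutionLift_revolve_eq {u : ℝ × ℝ → ℝ × ℝ} {γ γ' : ℝ → ℝ × ℝ}
    {φ : ℝ → ℝ} {t₀ : ℝ} (hcomm : ∀ᶠ t in 𝓝 t₀, u (γ t) = γ' (φ t))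
    (hγ : ∀ᶠ t in 𝓝 t₀, 0 < (γ t).1) (θ₀ : ℝ) :
    ∀ᶠ p : ℝ × ℝ in 𝓝 (t₀, θ₀),
      revolutionLift u (revolve (γ p.1) p.2) = revolve (γ' (φ p.1)) p.2 := by
  filter_upwards [(hcomm.and hγ).prod_inl_nhds θ₀] with p ⟨hup, hpos⟩
  rw [revolutionLift_revolve u hpos, hup]

theorem equivalence_of_profile_curves_lifts_to_surfaces_of_revolution_general
    (x z x' z' : ℝ → ℝ) (t₀ t₀' θ₀ : ℝ)
    (hx : ContDiff ℝ (⊤ : ℕ∞) x)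
    (hx0 : x t₀ > 0) (hx0' : x' t₀' > 0)
    (φ : ℝ → ℝ) (ψ₁ ψ₂ : ℝ × ℝ → ℝ)
    (hφ : DiffeoGermAt φ t₀ t₀')
    (hψ : DiffeoGermAt (fun p => (ψ₁ p, ψ₂ p)) (x t₀, z t₀) (x' t₀', z' t₀'))
    (hcomm : ∀ᶠ t in nhds t₀,
      (ψ₁ (x t, z t), ψ₂ (x t, z t)) = (x' (φ t), z' (φ t)))
    (Φ : ℝ × ℝ → ℝ × ℝ) (hΦ : ∀ p : ℝ × ℝ, Φ p = (φ p.1, p.2))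
    (Ψ : ℝ × ℝ × ℝ → ℝ × ℝ × ℝ)
    (hΨ : ∀ q : ℝ × ℝ × ℝ, Ψ q =
      (q.1 * ψ₁ (Real.sqrt (q.1 ^ 2 + q.2.1 ^ 2), q.2.2) /
          Real.sqrt (q.1 ^ 2 + q.2.1 ^ 2),
       q.2.1 * ψ₁ (Real.sqrt (q.1 ^ 2 + q.2.1 ^ 2), q.2.2) /
          Real.sqrt (q.1 ^ 2 + q.2.1 ^ 2),
       ψ₂ (Real.sqrt (q.1 ^ 2 + q.2.1 ^ 2), q.2.2))) :
    DiffeoGermAt Φ (t₀, θ₀) (t₀', θ₀) ∧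
    DiffeoGermAt Ψ (x t₀ * cos θ₀, x t₀ * sin θ₀, z t₀)
      (x' t₀' * cos θ₀, x' t₀' * sin θ₀, z' t₀') ∧
    ∀ᶠ p : ℝ × ℝ in nhds (t₀, θ₀),
      Ψ (x p.1 * cos p.2, x p.1 * sin p.2, z p.1) =
        (x' ((Φ p).1) * cos ((Φ p).2), x' ((Φ p).1) * sin ((Φ p).2),
          z' ((Φ p).1)) := by
  obtain rfl : Φ = Prod.map φ id := funext hΦ
  obtain rfl : Ψ = revolutionLift (fun p => (ψ₁ p, ψ₂ p)) := funext hΨ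
  have hx_pos : ∀ᶠ t in 𝓝 t₀, 0 < x t :=
    (hx.continuous.tendsto t₀).eventually (eventually_gt_nhds hx0)
  exact ⟨hφ.prodMap (DiffeoGermAt.id θ₀), hψ.revolutionLift hx0 hx0' θ₀,
    eventually_revolutionLift_revolve_eq (γ := fun t => (x t, z t))
      (γ' := fun t => (x' t, z' t)) hcomm hx_pos θ₀⟩

/-- Let `γ = (x, z)` and `γ' = (x', z')` be smooth curves with
`x t₀ > 0`, `x' t₀' > 0`, and let `𝐳`, `𝐳'` be their surfaces of revolution around the
z-axis.  If a diffeomorphism germ `φ : (I, t₀) → (I', t₀')` and a diffeomorphism germ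
`ψ = (ψ₁, ψ₂)` of `(ℝ², γ(t₀))` satisfy `ψ ∘ γ = γ' ∘ φ`, then `Φ(t,θ) = (φ t, θ)` and
`Ψ(X,Y,Z) = (Xψ₁(√(X²+Y²),Z)/√(X²+Y²), Yψ₁(√(X²+Y²),Z)/√(X²+Y²), ψ₂(√(X²+Y²),Z))` are
diffeomorphism germs with `Ψ ∘ 𝐳 = 𝐳' ∘ Φ` near `(t₀, θ₀)`. -/
theorem equivalence_of_profile_curves_lifts_to_surfaces_of_revolution
    (x z x' z' : ℝ → ℝ) (t₀ t₀' θ₀ : ℝ)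
    (hx : ContDiff ℝ (⊤ : ℕ∞) x) (hz : ContDiff ℝ (⊤ : ℕ∞) z)
    (hx' : ContDiff ℝ (⊤ : ℕ∞) x') (hz' : ContDiff ℝ (⊤ : ℕ∞) z')
    (hx0 : x t₀ > 0) (hx0' : x' t₀' > 0)
    (φ : ℝ → ℝ) (ψ₁ ψ₂ : ℝ × ℝ → ℝ)
    (hφ : DiffeoGermAt φ t₀ t₀')
    (hψ : DiffeoGermAt (fun p => (ψ₁ p, ψ₂ p)) (x t₀, z t₀) (x' t₀', z' t₀'))
    (hcomm : ∀ᶠ t in nhds t₀,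
      (ψ₁ (x t, z t), ψ₂ (x t, z t)) = (x' (φ t), z' (φ t)))
    (Φ : ℝ × ℝ → ℝ × ℝ) (hΦ : ∀ p : ℝ × ℝ, Φ p = (φ p.1, p.2))
    (Ψ : ℝ × ℝ × ℝ → ℝ × ℝ × ℝ)
    (hΨ : ∀ q : ℝ × ℝ × ℝ, Ψ q =
      (q.1 * ψ₁ (Real.sqrt (q.1 ^ 2 + q.2.1 ^ 2), q.2.2) /
          Real.sqrt (q.1 ^ 2 + q.2.1 ^ 2),
       q.2.1 * ψ₁ (Real.sqrt (q.1 ^ 2 + q.2.1 ^ 2), q.2.2) /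
          Real.sqrt (q.1 ^ 2 + q.2.1 ^ 2),
       ψ₂ (Real.sqrt (q.1 ^ 2 + q.2.1 ^ 2), q.2.2))) :
    DiffeoGermAt Φ (t₀, θ₀) (t₀', θ₀) ∧
    DiffeoGermAt Ψ (x t₀ * cos θ₀, x t₀ * sin θ₀, z t₀)
      (x' t₀' * cos θ₀, x' t₀' * sin θ₀, z' t₀') ∧
    ∀ᶠ p : ℝ × ℝ in nhds (t₀, θ₀),
      Ψ (x p.1 * cos p.2, x p.1 * sin p.2, z p.1) =
        (x' ((Φ p).1) * cos ((Φ p).2), x' ((Φ p).1) * sin ((Φ p).2),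
          z' ((Φ p).1)) :=
  equivalence_of_profile_curves_lifts_to_surfaces_of_revolution_general x z x' z' t₀ t₀' θ₀ hx hx0
    hx0' φ ψ₁ ψ₂ hφ hψ hcomm Φ hΦ Ψ hΨ
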